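/- Single complete monotone for exact conversion to pure states in a convex resource theory (Proposition 3). Let A, B be finite types, let O_AB be a nonempty, convex, compact set of quantum channels A → B (compact in the finite-dimensional space of linear maps Matrix A A ℂ →ₗ[ℂ] Matrix B B ℂ), and let O_BB be a set of quantum channels B → B that contains the identity map and is such that F ∘ E ∈ O_AB whenever E ∈ O_AB and F ∈ O_BB. Let ρ be a state on A and ψ a unit vector on B. Then there exists E ∈ O_AB with E ρ = Matrix.vecMulVec ψ (star ψ) if and only if sSup {(star ψ ⬝ᵥ (E ρ).mulVec ψ).re | E ∈ O_AB} ≥ sSup {(star ψ ⬝ᵥ (F (Matrix.vecMulVec ψ (star ψ))).mulVec ψ).re | F ∈ O_BB}. -/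

import Mathlib

open scoped Kronecker ComplexOrder
open Matrix MeasureTheory

noncomputable section

/-- Choi matrix of a linear map on matrices. -/
def choiMatrix {A B : Type*} [Fintype A] [DecidableEq A] [Fintype B]
    (E : Matrix A A ℂ →ₗ[ℂ] Matrix B B ℂ) : Matrix (A × B) (A × B) ℂ :=
  ∑ i, ∑ j, (Matrix.single i j (1 : ℂ)) ⊗ₖ E (Matrix.single i j 1)

/-- A linear map is a quantum channel if it is trace-preserving and its Choi matrix is PSD. -/
def IsQuantumChannel {A B : Type*} [Fintype A] [DecidableEq A] [Fintype B]
    (E : Matrix A A ℂ →ₗ[ℂ] Matrix B B ℂ) : Prop :=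
  (∀ X, (E X).trace = X.trace) ∧ (choiMatrix E).PosSemidef

/-- A state: positive semidefinite with unit trace. -/
def IsState {S : Type*} [Fintype S] (ρ : Matrix S S ℂ) : Prop := ρ.PosSemidef ∧ ρ.trace = 1

/-- A unit vector. -/
def IsUnitVector {S : Type*} [Fintype S] (ψ : S → ℂ) : Prop := ∑ s, ‖ψ s‖ ^ 2 = 1

/-- The pure state (rank-one projector) of a vector. -/
def pureState {S : Type*} (ψ : S → ℂ) : Matrix S S ℂ := Matrix.vecMulVec ψ (star ψ)

/-!
For a state `σ` and a unit vector `ψ`, write `σ = Nᴴ N` and `Q = 1 - |ψ⟩⟨ψ|`; then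
`tr σ - ⟨ψ|σ|ψ⟩ = tr ((N Q)ᴴ (N Q)) ≥ 0`, with equality only if `N Q = 0`, i.e. `σ = |ψ⟩⟨ψ|`
when `tr σ = 1`. Channels map states to states (their Choi matrix is positive), so the right-hand
supremum is `1`, attained by the identity, and every fidelity on the left is at most `1`.
By compactness the left supremum is attained, so it reaches `1` exactly when some free channel
sends `ρ` to a state of fidelity `1`, that is, onto `|ψ⟩⟨ψ|`.
-/

theorem choiMatrix_apply {A B : Type*} [Fintype A] [DecidableEq A] [Fintype B]
    (E : Matrix A A ℂ →ₗ[ℂ] Matrix B B ℂ) (a c : A) (b d : B) :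
    choiMatrix E (a, b) (c, d) = E (single a c 1) b d := by
  simp [choiMatrix, Matrix.sum_apply, single_apply, ite_and]

theorem apply_eq_sum_choiMatrix {A B : Type*} [Fintype A] [DecidableEq A] [Fintype B]
    (E : Matrix A A ℂ →ₗ[ℂ] Matrix B B ℂ) (X : Matrix A A ℂ) (b d : B) :
    E X b d = ∑ a, ∑ c, X a c * choiMatrix E (a, b) (c, d) := by
  conv_lhs => rw [matrix_eq_sum_single X]
  have (a c : A) : single a c (X a c) = X a c • single a c 1 := by simp [smul_single]
  simp only [this, map_sum, map_smul, Matrix.sum_apply, Matrix.smul_apply, smul_eq_mul,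
    choiMatrix_apply]

theorem exists_apply_vecMulVec_eq_conjTranspose_mul_choiMatrix_mul {A B : Type*} [Fintype A]
    [DecidableEq A] [Fintype B] [DecidableEq B]
    (E : Matrix A A ℂ →ₗ[ℂ] Matrix B B ℂ) (v : A → ℂ) :
    ∃ V : Matrix (A × B) B ℂ, E (vecMulVec v (star v)) = Vᴴ * choiMatrix E * V := by
  -- `V = conj v ⊗ 1`, so `Vᴴ * choiMatrix E * V` contracts the Choi matrix against `v vᴴ`.
  refine ⟨of fun p d => if p.2 = d then star (v p.1) else 0, ?_⟩
  ext b d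
  rw [apply_eq_sum_choiMatrix E]
  simp [Matrix.mul_apply, Fintype.sum_prod_type, Finset.sum_mul, vecMulVec_apply,
    apply_ite (starRingEnd ℂ)]
  rw [Finset.sum_comm]
  exact Finset.sum_congr rfl fun _ _ => Finset.sum_congr rfl fun _ _ => by ring

theorem posSemidef_apply_of_posSemidef_choiMatrix {A B : Type*} [Fintype A] [DecidableEq A]
    [Fintype B] [DecidableEq B] {E : Matrix A A ℂ →ₗ[ℂ] Matrix B B ℂ}
    (hE : (choiMatrix E).PosSemidef) {ρ : Matrix A A ℂ} (hρ : ρ.PosSemidef) :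
    (E ρ).PosSemidef := by
  obtain ⟨m, v, rfl⟩ := posSemidef_iff_eq_sum_vecMulVec.mp hρ
  rw [map_sum]
  refine posSemidef_sum _ fun i _ => ?_
  obtain ⟨V, hV⟩ := exists_apply_vecMulVec_eq_conjTranspose_mul_choiMatrix_mul E (v i)
  exact hV ▸ hE.conjTranspose_mul_mul_same V

theorem conjTranspose_pureState {S : Type*} (ψ : S → ℂ) : (pureState ψ)ᴴ = pureState ψ := by
  simp [pureState]

section PureState

variable {S : Type*} [Fintype S] {ψ : S → ℂ} {σ : Matrix S S ℂ}

theorem IsUnitVector.star_dotProduct_self (hψ : IsUnitVector ψ) : star ψ ⬝ᵥ ψ = 1 := by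
  simp only [dotProduct, Pi.star_apply, RCLike.star_def, Complex.conj_mul']
  exact_mod_cast hψ

theorem pureState_mul_pureState (hψ : IsUnitVector ψ) :
    pureState ψ * pureState ψ = pureState ψ := by
  simp [pureState, vecMulVec_mul_vecMulVec, hψ.star_dotProduct_self]

theorem pureState_mul_mul_pureState (M : Matrix S S ℂ) :
    pureState ψ * M * pureState ψ = (star ψ ⬝ᵥ M *ᵥ ψ) • pureState ψ := by
  rw [pureState, vecMulVec_mul, vecMulVec_mul_vecMulVec, dotProduct_mulVec, vecMulVec_smul]

theorem trace_mul_pureState (M : Matrix S S ℂ) :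
    (M * pureState ψ).trace = star ψ ⬝ᵥ M *ᵥ ψ := by
  rw [pureState, mul_vecMulVec, trace_vecMulVec, dotProduct_comm]

theorem trace_sub_dotProduct_mulVec [DecidableEq S] (hψ : IsUnitVector ψ) (N : Matrix S S ℂ) :
    (Nᴴ * N).trace - star ψ ⬝ᵥ (Nᴴ * N) *ᵥ ψ =
      ((N * (1 - pureState ψ))ᴴ * (N * (1 - pureState ψ))).trace := by
  have hQ : (1 - pureState ψ) * (1 - pureState ψ) = 1 - pureState ψ := by
    rw [sub_mul, mul_sub, mul_sub, pureState_mul_pureState hψ]; simp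
  have hQ' : (1 - pureState ψ)ᴴ = 1 - pureState ψ := by
    rw [conjTranspose_sub, conjTranspose_one, conjTranspose_pureState]
  rw [conjTranspose_mul, hQ', ← Matrix.mul_assoc, trace_mul_cycle, ← Matrix.mul_assoc, hQ,
    Matrix.mul_assoc, trace_mul_comm (1 - pureState ψ), Matrix.mul_sub, Matrix.mul_one, trace_sub,
    trace_mul_pureState]

theorem Matrix.PosSemidef.dotProduct_mulVec_le_trace (hσ : σ.PosSemidef) (hψ : IsUnitVector ψ) :
    star ψ ⬝ᵥ σ *ᵥ ψ ≤ σ.trace := by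
  classical
  open scoped MatrixOrder in
  obtain ⟨N, rfl⟩ := CStarAlgebra.nonneg_iff_eq_star_mul_self.mp hσ.nonneg
  rw [← sub_nonneg, star_eq_conjTranspose, trace_sub_dotProduct_mulVec hψ]
  exact (posSemidef_conjTranspose_mul_self _).trace_nonneg

theorem Matrix.PosSemidef.eq_smul_pureState_of_dotProduct_mulVec_eq_trace (hσ : σ.PosSemidef)
    (hψ : IsUnitVector ψ) (h : star ψ ⬝ᵥ σ *ᵥ ψ = σ.trace) :
    σ = (star ψ ⬝ᵥ σ *ᵥ ψ) • pureState ψ := by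
  classical
  open scoped MatrixOrder in
  obtain ⟨N, rfl⟩ := CStarAlgebra.nonneg_iff_eq_star_mul_self.mp hσ.nonneg
  rw [star_eq_conjTranspose] at h ⊢
  have hNQ : N * (1 - pureState ψ) = 0 := by
    rw [← trace_conjTranspose_mul_self_eq_zero_iff, ← trace_sub_dotProduct_mulVec hψ, h, sub_self]
  have hN : N * pureState ψ = N := by
    rwa [Matrix.mul_sub, Matrix.mul_one, sub_eq_zero, eq_comm] at hNQ
  calc Nᴴ * N = (N * pureState ψ)ᴴ * (N * pureState ψ) := by rw [hN]
    _ = pureState ψ * (Nᴴ * N) * pureState ψ := by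
      rw [conjTranspose_mul, conjTranspose_pureState]; simp only [Matrix.mul_assoc]
    _ = _ := pureState_mul_mul_pureState _

theorem IsUnitVector.isState_pureState (hψ : IsUnitVector ψ) : IsState (pureState ψ) :=
  ⟨posSemidef_vecMulVec_self_star ψ, by
    rw [pureState, trace_vecMulVec, dotProduct_comm, hψ.star_dotProduct_self]⟩

theorem IsUnitVector.dotProduct_pureState_mulVec (hψ : IsUnitVector ψ) :
    star ψ ⬝ᵥ pureState ψ *ᵥ ψ = 1 := by
  rw [← trace_mul_pureState, pureState_mul_pureState hψ, hψ.isState_pureState.2]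

theorem IsState.dotProduct_mulVec_le_one (hσ : IsState σ) (hψ : IsUnitVector ψ) :
    star ψ ⬝ᵥ σ *ᵥ ψ ≤ 1 :=
  hσ.2 ▸ hσ.1.dotProduct_mulVec_le_trace hψ

theorem IsState.re_dotProduct_mulVec_le_one (hσ : IsState σ) (hψ : IsUnitVector ψ) :
    (star ψ ⬝ᵥ σ *ᵥ ψ).re ≤ 1 :=
  (Complex.le_def.mp (hσ.dotProduct_mulVec_le_one hψ)).1

theorem IsState.eq_pureState_of_dotProduct_mulVec_eq_one (hσ : IsState σ)
    (hψ : IsUnitVector ψ) (h : star ψ ⬝ᵥ σ *ᵥ ψ = 1) : σ = pureState ψ := by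
  rw [hσ.1.eq_smul_pureState_of_dotProduct_mulVec_eq_trace hψ (h.trans hσ.2.symm), h, one_smul]

end PureState

theorem IsQuantumChannel.isState_apply {A B : Type*} [Fintype A] [DecidableEq A] [Fintype B]
    [DecidableEq B] {E : Matrix A A ℂ →ₗ[ℂ] Matrix B B ℂ} (hE : IsQuantumChannel E)
    {ρ : Matrix A A ℂ} (hρ : IsState ρ) : IsState (E ρ) :=
  ⟨posSemidef_apply_of_posSemidef_choiMatrix hE.2 hρ.1, (hE.1 ρ).trans hρ.2⟩

theorem exists_mem_sSup_eq_of_isCompact_coe {F X Y : Type*} [FunLike F X Y] [TopologicalSpace Y]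
    {O : Set F} (hne : O.Nonempty) (hcpt : IsCompact (DFunLike.coe '' O)) (x : X)
    {φ : Y → ℝ} (hφ : Continuous φ) :
    ∃ E ∈ O, sSup {r : ℝ | ∃ E ∈ O, r = φ (E x)} = φ (E x) := by
  obtain ⟨_, ⟨E, hE, rfl⟩, hmax⟩ :=
    hcpt.exists_sSup_image_eq (hne.image _) (hφ.comp (continuous_apply x)).continuousOn
  refine ⟨E, hE, Eq.trans ?_ hmax⟩
  congr 1
  ext r
  simp [eq_comm]

theorem single_monotone_exact_conversion_general
    {A B : Type*} [Fintype A] [DecidableEq A] [Fintype B] [DecidableEq B]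
    (OAB : Set (Matrix A A ℂ →ₗ[ℂ] Matrix B B ℂ))
    (hne : OAB.Nonempty)
    (hcpt : IsCompact (DFunLike.coe '' OAB : Set (Matrix A A ℂ → Matrix B B ℂ)))
    (hch : ∀ E ∈ OAB, IsQuantumChannel E)
    (OBB : Set (Matrix B B ℂ →ₗ[ℂ] Matrix B B ℂ))
    (hchB : ∀ F ∈ OBB, IsQuantumChannel F)
    (hid : LinearMap.id ∈ OBB)
    (ρ : Matrix A A ℂ) (hρ : IsState ρ) (ψ : B → ℂ) (hψ : IsUnitVector ψ) :
    (∃ E ∈ OAB, E ρ = pureState ψ) ↔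
      sSup {r : ℝ | ∃ E ∈ OAB, r = (star ψ ⬝ᵥ (E ρ).mulVec ψ).re} ≥
        sSup {r : ℝ | ∃ F ∈ OBB, r = (star ψ ⬝ᵥ (F (pureState ψ)).mulVec ψ).re} := by
  have hfidB : sSup {r : ℝ | ∃ F ∈ OBB, r = (star ψ ⬝ᵥ (F (pureState ψ)).mulVec ψ).re} = 1 := by
    refine IsGreatest.csSup_eq ⟨⟨LinearMap.id, hid, by simp [hψ.dotProduct_pureState_mulVec]⟩, ?_⟩
    rintro r ⟨F, hF, rfl⟩
    exact ((hchB F hF).isState_apply hψ.isState_pureState).re_dotProduct_mulVec_le_one hψ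
  rw [ge_iff_le, hfidB]
  constructor
  · rintro ⟨E, hE, hEρ⟩
    refine le_csSup ⟨1, ?_⟩ ⟨E, hE, by simp [hEρ, hψ.dotProduct_pureState_mulVec]⟩
    rintro r ⟨E, hE, rfl⟩
    exact ((hch E hE).isState_apply hρ).re_dotProduct_mulVec_le_one hψ
  · intro h
    obtain ⟨E, hE, hmax⟩ := exists_mem_sSup_eq_of_isCompact_coe hne hcpt ρ
      (φ := fun σ : Matrix B B ℂ => (star ψ ⬝ᵥ σ *ᵥ ψ).re) (by fun_prop)
    have hEρ := (hch E hE).isState_apply hρ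
    have hle := hEρ.dotProduct_mulVec_le_one hψ
    refine ⟨E, hE, hEρ.eq_pureState_of_dotProduct_mulVec_eq_one hψ (le_antisymm hle ?_)⟩
    exact Complex.le_def.mpr ⟨hmax ▸ h, (Complex.le_def.mp hle).2.symm⟩

/-- **Proposition 3 (Single complete monotone for exact conversion to pure states).**
In a closed convex resource theory, `ρ` converts exactly to the pure state of `ψ` by a
free operation iff the fidelity of distillation satisfies `F_ψ(ρ) ≥ F_ψ(ψ)`. -/
theorem single_monotone_exact_conversion
    {A B : Type*} [Fintype A] [DecidableEq A] [Fintype B] [DecidableEq B]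
    (OAB : Set (Matrix A A ℂ →ₗ[ℂ] Matrix B B ℂ))
    (hne : OAB.Nonempty) (hconv : Convex ℝ OAB)
    (hcpt : IsCompact (DFunLike.coe '' OAB : Set (Matrix A A ℂ → Matrix B B ℂ)))
    (hch : ∀ E ∈ OAB, IsQuantumChannel E)
    (OBB : Set (Matrix B B ℂ →ₗ[ℂ] Matrix B B ℂ))
    (hchB : ∀ F ∈ OBB, IsQuantumChannel F)
    (hid : LinearMap.id ∈ OBB)
    (hcomp : ∀ E ∈ OAB, ∀ F ∈ OBB, F ∘ₗ E ∈ OAB)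
    (ρ : Matrix A A ℂ) (hρ : IsState ρ) (ψ : B → ℂ) (hψ : IsUnitVector ψ) :
    (∃ E ∈ OAB, E ρ = pureState ψ) ↔
      sSup {r : ℝ | ∃ E ∈ OAB, r = (star ψ ⬝ᵥ (E ρ).mulVec ψ).re} ≥
        sSup {r : ℝ | ∃ F ∈ OBB, r = (star ψ ⬝ᵥ (F (pureState ψ)).mulVec ψ).re} :=
  single_monotone_exact_conversion_general OAB hne hcpt hch OBB hchB hid ρ hρ ψ hψ

end
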